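/- The matrix function B^{ZC}(τ) = B₂₂(τ)^{-1} B₂₁(τ), where the block matrix [[B₁₁,B₁₂],[B₂₁,B₂₂]](τ) = exp(τ·[[M, −2Q^⊤Q],[−H, −M^⊤]]), satisfies the matrix Riccati ODE dB^{ZC}/dτ = B^{ZC}M + M^⊤B^{ZC} + 2B^{ZC}Q^⊤Q B^{ZC} − H with B^{ZC}(0) = 0, on any interval where B₂₂(τ) is invertible. -/

import Mathlib

/-!
Radon's lemma: if `E' = E A`, the lower blocks `X = E₂₁`, `Y = E₂₂` satisfy the linear system
`X' = X A₁₁ + Y A₂₁`, `Y' = X A₁₂ + Y A₂₂`, and the quotient rule `(Y⁻¹)' = -Y⁻¹ Y' Y⁻¹` turns this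
into the Riccati equation `B' = B A₁₁ - A₂₂ B - B A₁₂ B + A₂₁` for `B = Y⁻¹ X`. For
`A = [[M, -2QᵀQ], [-H, -Mᵀ]]` this is the stated equation, and `B(0) = 0` because `E(0) = 1`.
-/

open Matrix NormedSpace

theorem HasDerivAt.ringInverse {𝕜 R : Type*} [NontriviallyNormedField 𝕜] [NormedRing R]
    [NormedAlgebra 𝕜 R] [HasSummableGeomSeries R] {f : 𝕜 → R} {f' : R} {t : 𝕜}
    (hf : HasDerivAt f f' t) (hu : IsUnit (f t)) :
    HasDerivAt (fun s => Ring.inverse (f s))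
      (-(Ring.inverse (f t) * f' * Ring.inverse (f t))) t := by
  obtain ⟨u, hu⟩ := hu
  have := (hu ▸ hasFDerivAt_ringInverse (𝕜 := 𝕜) u).comp_hasDerivAt t hf
  simpa [← hu, mul_assoc, Function.comp_def] using this

namespace Matrix

variable {l m n o α : Type*}

section Blocks

variable [Fintype m] [Fintype n]

theorem toBlocks₂₁_mul [NonUnitalNonAssocSemiring α] (X : Matrix (l ⊕ o) (m ⊕ n) α)
    (A : Matrix (m ⊕ n) (m ⊕ n) α) :
    (X * A).toBlocks₂₁ = X.toBlocks₂₁ * A.toBlocks₁₁ + X.toBlocks₂₂ * A.toBlocks₂₁ := by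
  ext i j
  simp [toBlocks₂₁, toBlocks₁₁, toBlocks₂₂, mul_apply, Fintype.sum_sum_type]

theorem toBlocks₂₂_mul [NonUnitalNonAssocSemiring α] (X : Matrix (l ⊕ o) (m ⊕ n) α)
    (A : Matrix (m ⊕ n) (m ⊕ n) α) :
    (X * A).toBlocks₂₂ = X.toBlocks₂₁ * A.toBlocks₁₂ + X.toBlocks₂₂ * A.toBlocks₂₂ := by
  ext i j
  simp [toBlocks₂₁, toBlocks₁₂, toBlocks₂₂, mul_apply, Fintype.sum_sum_type]

variable [DecidableEq n] [CommRing α]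

noncomputable def lowerBlockRatio (E : Matrix (m ⊕ n) (m ⊕ n) α) : Matrix n m α :=
  E.toBlocks₂₂⁻¹ * E.toBlocks₂₁

omit [Fintype m] in
theorem lowerBlockRatio_one [DecidableEq m] :
    lowerBlockRatio (1 : Matrix (m ⊕ n) (m ⊕ n) α) = 0 := by
  rw [lowerBlockRatio, ← fromBlocks_one, toBlocks_fromBlocks₂₁, Matrix.mul_zero]

end Blocks

variable {𝕜 : Type*} [RCLike 𝕜] [Fintype l] [Fintype m] [Fintype n] [Fintype o]

-- The statements below are norm-free (matrices carry the product topology); the operator norm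
-- only serves to invoke Banach-algebra calculus in the proofs.
attribute [local instance] Matrix.linftyOpNormedAddCommGroup Matrix.linftyOpNormedSpace
  Matrix.linftyOpNormedRing Matrix.linftyOpNormedAlgebra

theorem _root_.HasDerivAt.matrix_apply {f : 𝕜 → Matrix m n 𝕜} {f' : Matrix m n 𝕜} {t : 𝕜}
    (hf : HasDerivAt f f' t) (i : m) (j : n) :
    HasDerivAt (fun s => f s i j) (f' i j) t :=
  (entryLinearMap 𝕜 𝕜 i j).toContinuousLinearMap.hasFDerivAt.comp_hasDerivAt t hf

theorem _root_.HasDerivAt.matrix_submatrix {f : 𝕜 → Matrix m n 𝕜} {f' : Matrix m n 𝕜} {t : 𝕜}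
    (hf : HasDerivAt f f' t) (r : l → m) (c : o → n) :
    HasDerivAt (fun s => (f s).submatrix r c) (f'.submatrix r c) t :=
  let L : Matrix m n 𝕜 →ₗ[𝕜] Matrix l o 𝕜 :=
    { toFun := fun X => X.submatrix r c, map_add' := fun _ _ => rfl, map_smul' := fun _ _ => rfl }
  L.toContinuousLinearMap.hasFDerivAt.comp_hasDerivAt t hf

theorem _root_.HasDerivAt.matrix_mul {f : 𝕜 → Matrix l m 𝕜} {g : 𝕜 → Matrix m n 𝕜}
    {f' : Matrix l m 𝕜} {g' : Matrix m n 𝕜} {t : 𝕜}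
    (hf : HasDerivAt f f' t) (hg : HasDerivAt g g' t) :
    HasDerivAt (fun s => f s * g s) (f t * g' + f' * g t) t :=
  let B : Matrix l m 𝕜 →L[𝕜] Matrix m n 𝕜 →L[𝕜] Matrix l n 𝕜 :=
    LinearMap.toContinuousLinearMap
      (LinearMap.toContinuousLinearMap.toLinearMap ∘ₗ mulLinearMap 𝕜)
  B.hasDerivAt_of_bilinear (fun _ => hf) (fun _ => hg)

variable [DecidableEq n]

theorem _root_.HasDerivAt.matrix_inv {f : 𝕜 → Matrix n n 𝕜} {f' : Matrix n n 𝕜}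
    {t : 𝕜} (hf : HasDerivAt f f' t) (hdet : IsUnit (f t).det) :
    HasDerivAt (fun s => (f s)⁻¹) (-((f t)⁻¹ * f' * (f t)⁻¹)) t := by
  simp only [nonsing_inv_eq_ringInverse]
  exact hf.ringInverse ((isUnit_iff_isUnit_det _).mpr hdet)

theorem hasDerivAt_exp_smul {ι : Type*} [Fintype ι] [DecidableEq ι] (A : Matrix ι ι 𝕜)
    (t : 𝕜) :
    HasDerivAt (fun s => exp (s • A)) (exp (t • A) * A) t :=
  hasDerivAt_exp_smul_const A t

theorem hasDerivAt_lowerBlockRatio {E : 𝕜 → Matrix (m ⊕ n) (m ⊕ n) 𝕜}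
    {A : Matrix (m ⊕ n) (m ⊕ n) 𝕜} {t : 𝕜} (hE : HasDerivAt E (E t * A) t)
    (hdet : IsUnit (E t).toBlocks₂₂.det) :
    HasDerivAt (fun s => lowerBlockRatio (E s))
      (lowerBlockRatio (E t) * A.toBlocks₁₁ - A.toBlocks₂₂ * lowerBlockRatio (E t) -
        lowerBlockRatio (E t) * A.toBlocks₁₂ * lowerBlockRatio (E t) + A.toBlocks₂₁) t := by
  have hX : HasDerivAt (fun s => (E s).toBlocks₂₁) (E t * A).toBlocks₂₁ t :=
    hE.matrix_submatrix Sum.inr Sum.inl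
  have hY : HasDerivAt (fun s => (E s).toBlocks₂₂) (E t * A).toBlocks₂₂ t :=
    hE.matrix_submatrix Sum.inr Sum.inr
  refine ((hY.matrix_inv hdet).matrix_mul hX).congr_deriv ?_
  have hYY : (E t).toBlocks₂₂⁻¹ * (E t).toBlocks₂₂ = 1 := nonsing_inv_mul _ hdet
  rw [toBlocks₂₁_mul, toBlocks₂₂_mul]
  simp only [lowerBlockRatio, Matrix.mul_add, Matrix.add_mul, Matrix.neg_mul, ← Matrix.mul_assoc,
    hYY, Matrix.one_mul]
  abel

end Matrix

theorem zero_coupon_riccati_solution_general (d : ℕ) (M Q H : Matrix (Fin d) (Fin d) ℝ)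
    (E : ℝ → Matrix (Fin d ⊕ Fin d) (Fin d ⊕ Fin d) ℝ)
    (hE : E = fun τ => NormedSpace.exp
      (τ • Matrix.fromBlocks M (-(2 : ℝ) • (Qᵀ * Q)) (-H) (-Mᵀ)))
    (BZC : ℝ → Matrix (Fin d) (Fin d) ℝ)
    (hBZC : BZC = fun τ => ((E τ).toBlocks₂₂)⁻¹ * (E τ).toBlocks₂₁) :
    (∀ τ : ℝ, IsUnit ((E τ).toBlocks₂₂).det →
      ∀ i j, HasDerivAt (fun t => BZC t i j)
        ((BZC τ * M + Mᵀ * BZC τ + (2 : ℝ) • (BZC τ * Qᵀ * Q * BZC τ) - H) i j) τ) ∧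
    BZC 0 = 0 := by
  change BZC = fun τ => lowerBlockRatio (E τ) at hBZC
  subst hE hBZC
  have riccati_rhs : ∀ B : Matrix (Fin d) (Fin d) ℝ,
      B * M - -Mᵀ * B - B * (-(2 : ℝ) • (Qᵀ * Q)) * B + -H =
        B * M + Mᵀ * B + (2 : ℝ) • (B * Qᵀ * Q * B) - H := fun B => by
    simp only [Matrix.neg_mul, Matrix.mul_smul, Matrix.smul_mul, Matrix.mul_assoc]
    module
  refine ⟨fun τ hdet i j => ?_, by simp [lowerBlockRatio_one]⟩
  have hentry := (hasDerivAt_lowerBlockRatio (hasDerivAt_exp_smul _ τ) hdet).matrix_apply i j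
  simpa only [toBlocks_fromBlocks₁₁, toBlocks_fromBlocks₁₂, toBlocks_fromBlocks₂₁,
    toBlocks_fromBlocks₂₂, riccati_rhs] using hentry

/-- The function `B^{ZC}(τ) = B₂₂(τ)⁻¹ B₂₁(τ)`, where the blocks come from the
block matrix exponential `exp(τ·[[M, −2QᵀQ],[−H, −Mᵀ]])`, satisfies the matrix
Riccati ODE `dB^{ZC}/dτ = B^{ZC}M + Mᵀ B^{ZC} + 2 B^{ZC} QᵀQ B^{ZC} − H`
(entrywise, at any `τ` where `B₂₂(τ)` is invertible), with `B^{ZC}(0) = 0`. -/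
theorem zero_coupon_riccati_solution (d : ℕ) (M Q H : Matrix (Fin d) (Fin d) ℝ)
    (hH : H.PosSemidef)
    (E : ℝ → Matrix (Fin d ⊕ Fin d) (Fin d ⊕ Fin d) ℝ)
    (hE : E = fun τ => NormedSpace.exp
      (τ • Matrix.fromBlocks M (-(2 : ℝ) • (Qᵀ * Q)) (-H) (-Mᵀ)))
    (BZC : ℝ → Matrix (Fin d) (Fin d) ℝ)
    (hBZC : BZC = fun τ => ((E τ).toBlocks₂₂)⁻¹ * (E τ).toBlocks₂₁) :
    (∀ τ : ℝ, IsUnit ((E τ).toBlocks₂₂).det →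
      ∀ i j, HasDerivAt (fun t => BZC t i j)
        ((BZC τ * M + Mᵀ * BZC τ + (2 : ℝ) • (BZC τ * Qᵀ * Q * BZC τ) - H) i j) τ) ∧
    BZC 0 = 0 :=
  zero_coupon_riccati_solution_general d M Q H E hE BZC hBZC
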